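/- Let f, g, g̃, h : ℝ → ℝ with f, g, g̃ real analytic, g(0) = g̃(0) = 0, and suppose the derivative f' is not constant. If f(x + g(y)) = f(x + g̃(y)) + h(y) for all x, y ∈ ℝ, then g = g̃. -/

import Mathlib

/-!
Setting `x ↦ x - g̃ y` shows that every difference `g y - g̃ y` is a quasi-period of `f`: a shift
`t` with `f (x + t) - f x` independent of `x`. Quasi-periods form an additive subgroup of `ℝ`. If
`g ≠ g̃`, then `y ↦ g y - g̃ y` is continuous, vanishes at `0` and takes a nonzero value, so its
range contains an interval `[0, a]` with `a ≠ 0`. A subgroup of `ℝ` containing such an interval is a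
neighbourhood of `0`, hence open and closed, hence all of `ℝ`. Then `f` differs from each of its
translates by a constant, so `f'` is constant.
-/

open Set Filter Topology

def quasiPeriods {G M : Type*} [AddGroup G] [AddGroup M] (f : G → M) : AddSubgroup G where
  carrier := {t | ∃ c, ∀ x, f (x + t) = f x + c}
  zero_mem' := ⟨0, fun x => by simp⟩
  add_mem' := by
    rintro s t ⟨c, hc⟩ ⟨d, hd⟩
    exact ⟨c + d, fun x => by rw [← add_assoc, hd, hc, add_assoc]⟩
  neg_mem' := by
    rintro t ⟨c, hc⟩
    exact ⟨-c, fun x => by rw [eq_add_neg_iff_add_eq, ← hc, neg_add_cancel_right]⟩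

theorem sub_mem_quasiPeriods {G M : Type*} [AddCommGroup G] [AddGroup M] {f : G → M} {a b : G}
    {c : M} (h : ∀ x, f (x + a) = f (x + b) + c) : a - b ∈ quasiPeriods f :=
  ⟨c, fun x => by simpa [sub_add_eq_add_sub, add_sub_assoc] using h (x - b)⟩

theorem deriv_eq_deriv_zero_of_mem_quasiPeriods {𝕜 F : Type*} [NontriviallyNormedField 𝕜]
    [NormedAddCommGroup F] [NormedSpace 𝕜 F] {f : 𝕜 → F} {x : 𝕜} (hx : x ∈ quasiPeriods f) :
    deriv f x = deriv f 0 := by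
  obtain ⟨c, hc⟩ := hx
  calc deriv f x = deriv (fun t => f (t + x)) 0 := by rw [deriv_comp_add_const, zero_add]
    _ = deriv (fun t => f t + c) 0 := by simp_rw [hc]
    _ = deriv f 0 := deriv_add_const c

theorem AddSubgroup.eq_top_of_mem_nhds_zero {G : Type*} [AddGroup G] [TopologicalSpace G]
    [SeparatelyContinuousAdd G] [ConnectedSpace G] (H : AddSubgroup G)
    (hH : (H : Set G) ∈ 𝓝 0) : H = ⊤ := by
  have hopen := H.isOpen_of_mem_nhds hH
  exact SetLike.coe_injective <|
    (IsClopen.eq_univ ⟨H.isClosed_of_isOpen hopen, hopen⟩ ⟨0, H.zero_mem⟩).trans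
      AddSubgroup.coe_top.symm

theorem AddSubgroup.eq_top_of_uIcc_zero_subset (H : AddSubgroup ℝ) {a : ℝ} (ha : a ≠ 0)
    (hH : uIcc 0 a ⊆ H) : H = ⊤ := by
  refine H.eq_top_of_mem_nhds_zero (mem_of_superset
    (Icc_mem_nhds (neg_lt_zero.2 (abs_pos.2 ha)) (abs_pos.2 ha)) fun t ht => ?_)
  have : t ∈ uIcc 0 a ∨ -t ∈ uIcc 0 a := by
    simp only [mem_uIcc, mem_Icc] at ht ⊢
    grind
  rcases this with h | h
  · exact hH h
  · simpa using H.neg_mem (hH h)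

theorem stmt_2_general (f g g' h : ℝ → ℝ)
    (hg : ∀ x, AnalyticAt ℝ g x)
    (hg' : ∀ x, AnalyticAt ℝ g' x)
    (hg0 : g 0 = 0) (hg'0 : g' 0 = 0)
    (hf' : ¬ ∃ c : ℝ, ∀ x, deriv f x = c)
    (heq : ∀ x y : ℝ, f (x + g y) = f (x + g' y) + h y) :
    g = g' := by
  by_contra hne
  obtain ⟨y₀, hy₀⟩ := Function.ne_iff.mp hne
  have hcont : Continuous fun y => g y - g' y :=
    continuous_iff_continuousAt.2 fun y => ((hg y).sub (hg' y)).continuousAt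
  have hrange : range (fun y => g y - g' y) ⊆ quasiPeriods f :=
    range_subset_iff.2 fun y => sub_mem_quasiPeriods (heq · y)
  have htop : quasiPeriods f = ⊤ :=
    (quasiPeriods f).eq_top_of_uIcc_zero_subset (sub_ne_zero.2 hy₀) <|
      ((isPreconnected_range hcont).ordConnected.uIcc_subset ⟨0, by simp [hg0, hg'0]⟩
        ⟨y₀, rfl⟩).trans hrange
  exact hf' ⟨deriv f 0, fun x =>
    deriv_eq_deriv_zero_of_mem_quasiPeriods (htop ▸ AddSubgroup.mem_top x)⟩

theorem stmt_2 (f g g' h : ℝ → ℝ)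
    (hf : ∀ x, AnalyticAt ℝ f x) (hg : ∀ x, AnalyticAt ℝ g x)
    (hg' : ∀ x, AnalyticAt ℝ g' x)
    (hg0 : g 0 = 0) (hg'0 : g' 0 = 0)
    (hf' : ¬ ∃ c : ℝ, ∀ x, deriv f x = c)
    (heq : ∀ x y : ℝ, f (x + g y) = f (x + g' y) + h y) :
    g = g' :=
  stmt_2_general f g g' h hg hg' hg0 hg'0 hf' heq
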